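/- For k ≥ 2 and u > 0, (2π)^{−k/2} ∫_{B_k(√u)} (∂⁴/∂z₁⁴)(∂²/∂z₂²) exp(−|z|²/2) dz = 3·(−2u/k + 4u²/(k(k+2)) − 2u³/(k(k+2)(k+4))) · u^{k/2−1} exp(−u/2) / (2^{k/2} Γ(k/2)). -/

import Mathlib

open MeasureTheory Real

lemma hasDerivAt_gauss (c x : ℝ) :
    HasDerivAt (fun t => Real.exp (-(t ^ 2 + c) / 2)) (-x * Real.exp (-(x ^ 2 + c) / 2)) x := by
  have h1 : HasDerivAt (fun t : ℝ => -(t ^ 2 + c) / 2) (-x) x := by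
    have h : HasDerivAt (fun t : ℝ => t ^ 2 + c) (2 * x) x := by
      simpa using (hasDerivAt_pow 2 x).add_const c
    exact ((h.neg).div_const 2).congr_deriv (by ring)
  have := h1.exp
  convert this using 1; ring

lemma hasDerivAt_poly_gauss (c : ℝ) {p : ℝ → ℝ} {p' : ℝ → ℝ}
    (hp : ∀ x, HasDerivAt p (p' x) x) (x : ℝ) :
    HasDerivAt (fun t => p t * Real.exp (-(t ^ 2 + c) / 2))
      ((p' x - x * p x) * Real.exp (-(x ^ 2 + c) / 2)) x := by
  have := (hp x).mul (hasDerivAt_gauss c x)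
  exact this.congr_deriv (by ring)

lemma deriv_poly_gauss (c : ℝ) {p p' q : ℝ → ℝ} (hp : ∀ x, HasDerivAt p (p' x) x)
    (hq : ∀ x, q x = p' x - x * p x) :
    deriv (fun t => p t * Real.exp (-(t ^ 2 + c) / 2))
      = fun y => q y * Real.exp (-(y ^ 2 + c) / 2) :=
  funext fun y => by rw [(hasDerivAt_poly_gauss c hp y).deriv, hq]

lemma iter4_gauss (c x : ℝ) :
    iteratedDeriv 4 (fun t => Real.exp (-(t ^ 2 + c) / 2)) x
      = (x ^ 4 - 6 * x ^ 2 + 3) * Real.exp (-(x ^ 2 + c) / 2) := by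
  have h1 : deriv (fun t => Real.exp (-(t ^ 2 + c) / 2))
      = fun y => -y * Real.exp (-(y ^ 2 + c) / 2) :=
    funext fun y => (hasDerivAt_gauss c y).deriv
  have h2 : deriv (fun y : ℝ => -y * Real.exp (-(y ^ 2 + c) / 2))
      = fun y => (y ^ 2 - 1) * Real.exp (-(y ^ 2 + c) / 2) :=
    deriv_poly_gauss c (p := fun t => -t) (p' := fun _ => -1)
      (fun x => by exact (hasDerivAt_id x).neg) (fun x => by ring)
  have h3 : deriv (fun y : ℝ => (y ^ 2 - 1) * Real.exp (-(y ^ 2 + c) / 2))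
      = fun y => (3 * y - y ^ 3) * Real.exp (-(y ^ 2 + c) / 2) :=
    deriv_poly_gauss c (p := fun t => t ^ 2 - 1) (p' := fun t => 2 * t)
      (fun x => by simpa using (hasDerivAt_pow 2 x).sub_const 1) (fun x => by ring)
  have h4 : deriv (fun y : ℝ => (3 * y - y ^ 3) * Real.exp (-(y ^ 2 + c) / 2))
      = fun y => (y ^ 4 - 6 * y ^ 2 + 3) * Real.exp (-(y ^ 2 + c) / 2) :=
    deriv_poly_gauss c (p := fun t => 3 * t - t ^ 3) (p' := fun t => 3 - 3 * t ^ 2)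
      (fun x => by exact (((hasDerivAt_id x).const_mul 3).sub (hasDerivAt_pow 3 x)).congr_deriv (by norm_num))
      (fun x => by ring)
  have g1 : iteratedDeriv 1 (fun t => Real.exp (-(t ^ 2 + c) / 2))
      = fun y => -y * Real.exp (-(y ^ 2 + c) / 2) := by
    rw [iteratedDeriv_one, h1]
  have g2 : iteratedDeriv 2 (fun t => Real.exp (-(t ^ 2 + c) / 2))
      = fun y => (y ^ 2 - 1) * Real.exp (-(y ^ 2 + c) / 2) := by
    show iteratedDeriv (1 + 1) _ = _
    rw [iteratedDeriv_succ, g1, h2]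
  have g3 : iteratedDeriv 3 (fun t => Real.exp (-(t ^ 2 + c) / 2))
      = fun y => (3 * y - y ^ 3) * Real.exp (-(y ^ 2 + c) / 2) := by
    show iteratedDeriv (2 + 1) _ = _
    rw [iteratedDeriv_succ, g2, h3]
  have g4 : iteratedDeriv 4 (fun t => Real.exp (-(t ^ 2 + c) / 2))
      = fun y => (y ^ 4 - 6 * y ^ 2 + 3) * Real.exp (-(y ^ 2 + c) / 2) := by
    show iteratedDeriv (3 + 1) _ = _
    rw [iteratedDeriv_succ, g3, h4]
  rw [g4]

lemma iter2_gauss (A c x : ℝ) :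
    iteratedDeriv 2 (fun s => A * Real.exp (-(s ^ 2 + c) / 2)) x
      = (x ^ 2 - 1) * A * Real.exp (-(x ^ 2 + c) / 2) := by
  have h1 : deriv (fun s : ℝ => A * Real.exp (-(s ^ 2 + c) / 2))
      = fun y => -(y * A) * Real.exp (-(y ^ 2 + c) / 2) :=
    deriv_poly_gauss c (p := fun _ => A) (p' := fun _ => 0)
      (fun x => hasDerivAt_const x A) (fun x => by ring)
  have h2 : deriv (fun y : ℝ => -(y * A) * Real.exp (-(y ^ 2 + c) / 2))
      = fun y => (y ^ 2 - 1) * A * Real.exp (-(y ^ 2 + c) / 2) :=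
    deriv_poly_gauss c (p := fun t => -(t * A)) (p' := fun _ => -A)
      (fun x => by exact (((hasDerivAt_id x).mul_const A).neg).congr_deriv (by ring)) (fun x => by ring)
  have g1 : iteratedDeriv 1 (fun s : ℝ => A * Real.exp (-(s ^ 2 + c) / 2))
      = fun y => -(y * A) * Real.exp (-(y ^ 2 + c) / 2) := by
    rw [iteratedDeriv_one, h1]
  have g2 : iteratedDeriv 2 (fun s : ℝ => A * Real.exp (-(s ^ 2 + c) / 2))
      = fun y => (y ^ 2 - 1) * A * Real.exp (-(y ^ 2 + c) / 2) := by
    show iteratedDeriv (1 + 1) _ = _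
    rw [iteratedDeriv_succ, g1, h2]
  rw [g2]
open MeasureTheory Real Finset

lemma sum_update_sq {k : ℕ} (s : Finset (Fin k)) {j : Fin k} (hj : j ∈ s) (w : Fin k → ℝ)
    (t : ℝ) : ∑ i ∈ s, Function.update w j t i ^ 2 = t ^ 2 + ∑ i ∈ s \ {j}, w i ^ 2 := by
  have h : ∀ i, Function.update w j t i ^ 2
      = Function.update (fun i => w i ^ 2) j (t ^ 2) i := by
    intro i
    exact Function.apply_update (fun _ x => x ^ 2) w j t i
  rw [Finset.sum_congr rfl fun i _ => h i, Finset.sum_update_of_mem hj]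

lemma integrand_eq {k : ℕ} (h0 : 0 < k) (h1 : 1 < k) (z : Fin k → ℝ) :
    iteratedDeriv 2
      (fun s => iteratedDeriv 4
        (fun t => Real.exp
          (-(∑ i, Function.update (Function.update z ⟨1, h1⟩ s) ⟨0, h0⟩ t i ^ 2) / 2))
        (z ⟨0, h0⟩))
      (z ⟨1, h1⟩)
    = ((z ⟨0, h0⟩) ^ 4 - 6 * (z ⟨0, h0⟩) ^ 2 + 3) * ((z ⟨1, h1⟩) ^ 2 - 1)
        * Real.exp (-(∑ i, z i ^ 2) / 2) := by
  set i0 : Fin k := ⟨0, h0⟩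
  set i1 : Fin k := ⟨1, h1⟩
  have hne : i1 ≠ i0 := by simp [i0, i1, Fin.ext_iff]
  have hmem : i1 ∈ (Finset.univ : Finset (Fin k)) \ {i0} := by
    simp [Finset.mem_sdiff, hne]
  set R : ℝ := ∑ i ∈ (Finset.univ \ {i0}) \ {i1}, z i ^ 2 with hR
  have hsum : ∀ s t : ℝ,
      ∑ i, Function.update (Function.update z i1 s) i0 t i ^ 2 = t ^ 2 + (s ^ 2 + R) := by
    intro s t
    rw [sum_update_sq Finset.univ (Finset.mem_univ i0), sum_update_sq _ hmem]
  have hzsum : ∑ i, z i ^ 2 = z i0 ^ 2 + (z i1 ^ 2 + R) := by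
    rw [Finset.sum_eq_add_sum_sdiff_singleton_of_mem (Finset.mem_univ i0) (fun i => z i ^ 2),
      Finset.sum_eq_add_sum_sdiff_singleton_of_mem hmem (fun i => z i ^ 2)]
  have hinner : (fun s => iteratedDeriv 4
      (fun t => Real.exp
        (-(∑ i, Function.update (Function.update z i1 s) i0 t i ^ 2) / 2)) (z i0))
      = fun s => ((z i0) ^ 4 - 6 * (z i0) ^ 2 + 3) * Real.exp (-(s ^ 2 + (z i0 ^ 2 + R)) / 2) := by
    funext s
    have : (fun t => Real.exp
        (-(∑ i, Function.update (Function.update z i1 s) i0 t i ^ 2) / 2))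
        = fun t => Real.exp (-(t ^ 2 + (s ^ 2 + R)) / 2) := by
      funext t; rw [hsum]
    rw [this, iter4_gauss]
    congr 1
    rw [Real.exp_eq_exp]
    ring
  rw [hinner, iter2_gauss, hzsum]
  ring
open MeasureTheory Real Set Metric

lemma polar_integral {k : ℕ} (hk : 0 < k) (m : ℕ) (H : EuclideanSpace ℝ (Fin k) → ℝ)
    (hH : ∀ c : ℝ, 0 < c → ∀ x, H (c • x) = c ^ (2 * m) * H x) (f : ℝ → ℝ) :
    ∫ x : EuclideanSpace ℝ (Fin k), H x * f ‖x‖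
      = (∫ ω : sphere (0 : EuclideanSpace ℝ (Fin k)) 1, H ω ∂(volume.toSphere))
        * ∫ r in Ioi (0 : ℝ), r ^ (2 * m + k - 1) * f r := by
  have hnt : Nontrivial (EuclideanSpace ℝ (Fin k)) := by
    refine nontrivial_of_ne (EuclideanSpace.single ⟨0, hk⟩ (1 : ℝ)) 0 fun h => ?_
    have h1 : EuclideanSpace.single (⟨0, hk⟩ : Fin k) (1 : ℝ) ⟨0, hk⟩ = 1 := by
      simp [EuclideanSpace.single_apply]
    rw [h] at h1
    simp at h1
  have hdim : Module.finrank ℝ (EuclideanSpace ℝ (Fin k)) = k := finrank_euclideanSpace_fin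
  calc
    ∫ x : EuclideanSpace ℝ (Fin k), H x * f ‖x‖
        = ∫ x : ({0}ᶜ : Set (EuclideanSpace ℝ (Fin k))), H x.1 * f ‖x.1‖ ∂(volume.comap Subtype.val) := by
      rw [integral_subtype_comap (MeasurableSet.compl (measurableSet_singleton 0))
        (fun x => H x * f ‖x‖), MeasureTheory.restrict_compl_singleton]
    _ = ∫ y : sphere (0 : EuclideanSpace ℝ (Fin k)) 1 × Ioi (0 : ℝ),
          H y.1.1 * (y.2.1 ^ (2 * m) * f y.2.1)
          ∂(volume.toSphere.prod (Measure.volumeIoiPow (Module.finrank ℝ (EuclideanSpace ℝ (Fin k)) - 1))) := by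
      rw [← (Measure.measurePreserving_homeomorphUnitSphereProd
        (volume : Measure (EuclideanSpace ℝ (Fin k)))).integral_comp (Homeomorph.measurableEmbedding _)
        (fun y : sphere (0 : EuclideanSpace ℝ (Fin k)) 1 × Ioi (0 : ℝ) => H y.1.1 * (y.2.1 ^ (2 * m) * f y.2.1))]
      refine integral_congr_ae (Filter.Eventually.of_forall fun x => ?_)
      have hx : (x : EuclideanSpace ℝ (Fin k)) ≠ 0 := x.2
      have hnorm : (0 : ℝ) < ‖(x : EuclideanSpace ℝ (Fin k))‖ := norm_pos_iff.2 hx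
      simp only [homeomorphUnitSphereProd_apply_fst_coe, homeomorphUnitSphereProd_apply_snd_coe]
      have : H (x : EuclideanSpace ℝ (Fin k)) = ‖(x : EuclideanSpace ℝ (Fin k))‖ ^ (2 * m) * H (‖(x : EuclideanSpace ℝ (Fin k))‖⁻¹ • (x : EuclideanSpace ℝ (Fin k))) := by
        rw [← hH _ hnorm, smul_inv_smul₀ hnorm.ne']
      rw [this]; ring
    _ = (∫ ω : sphere (0 : EuclideanSpace ℝ (Fin k)) 1, H ω ∂(volume.toSphere))
          * ∫ r : Ioi (0 : ℝ), r.1 ^ (2 * m) * f r.1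
            ∂(Measure.volumeIoiPow (Module.finrank ℝ (EuclideanSpace ℝ (Fin k)) - 1)) :=
      integral_prod_mul (fun ω : sphere (0 : EuclideanSpace ℝ (Fin k)) 1 => H ω)
        (fun r : Ioi (0 : ℝ) => r.1 ^ (2 * m) * f r.1)
    _ = (∫ ω : sphere (0 : EuclideanSpace ℝ (Fin k)) 1, H ω ∂(volume.toSphere))
          * ∫ r in Ioi (0 : ℝ), r ^ (2 * m + k - 1) * f r := by
      congr 1
      rw [Measure.volumeIoiPow, hdim]
      simp only [ENNReal.ofReal]
      rw [integral_withDensity_eq_integral_smul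
        ((measurable_subtype_coe.pow_const _).real_toNNReal),
        integral_subtype_comap measurableSet_Ioi
          (fun a : ℝ => Real.toNNReal (a ^ (k - 1)) • (a ^ (2 * m) * f a))]
      refine setIntegral_congr_fun measurableSet_Ioi fun x hx => ?_
      have hx0 : (0 : ℝ) < x := hx
      rw [NNReal.smul_def, Real.coe_toNNReal _ (pow_nonneg hx0.le _), smul_eq_mul]
      rw [show 2 * m + k - 1 = (k - 1) + 2 * m by omega, pow_add]
      ring
open MeasureTheory Real Set Finset

lemma radial_eq (n : ℕ) :
    ∫ r in Ioi (0 : ℝ), r ^ n * Real.exp (-r ^ 2 / 2)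
      = 2 ^ (((n : ℝ) + 1) / 2 - 1) * Real.Gamma (((n : ℝ) + 1) / 2) := by
  have h := integral_rpow_mul_exp_neg_mul_rpow (p := 2) (q := (n : ℝ)) (b := 1 / 2)
    two_pos (lt_of_lt_of_le neg_one_lt_zero (Nat.cast_nonneg n)) (by norm_num)
  have heq : ∫ r in Ioi (0 : ℝ), r ^ n * Real.exp (-r ^ 2 / 2)
      = ∫ x in Ioi (0 : ℝ), x ^ (n : ℝ) * Real.exp (-(1 / 2) * x ^ (2 : ℝ)) := by
    refine setIntegral_congr_fun measurableSet_Ioi fun x hx => ?_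
    have hx0 : (0 : ℝ) < x := hx
    rw [Real.rpow_natCast, show (2 : ℝ) = ((2 : ℕ) : ℝ) by norm_num, Real.rpow_natCast]
    ring_nf
  rw [heq, h]
  have h2 : ((1 : ℝ) / 2) ^ (-((n : ℝ) + 1) / 2) = 2 ^ (((n : ℝ) + 1) / 2) := by
    rw [show (1 : ℝ) / 2 = 2 ^ (-1 : ℝ) by rw [Real.rpow_neg_one]; norm_num,
      ← Real.rpow_mul (by norm_num : (0 : ℝ) ≤ 2)]
    congr 1
    ring
  rw [h2]
  rw [show (2 : ℝ) ^ (((n : ℝ) + 1) / 2 - 1)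
      = 2 ^ (((n : ℝ) + 1) / 2) * 2 ^ (-1 : ℝ) by rw [← Real.rpow_add two_pos]; ring_nf]
  rw [Real.rpow_neg_one]
  ring

lemma radial_pos (n : ℕ) :
    0 < ∫ r in Ioi (0 : ℝ), r ^ n * Real.exp (-r ^ 2 / 2) := by
  rw [radial_eq]
  exact mul_pos (Real.rpow_pos_of_pos two_pos _) (Real.Gamma_pos_of_pos (by positivity))

lemma gm_even (j : ℕ) :
    ∫ t : ℝ, t ^ (2 * j) * Real.exp (-t ^ 2 / 2)
      = 2 ^ ((2 * (j : ℝ) + 1) / 2) * Real.Gamma ((2 * (j : ℝ) + 1) / 2) := by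
  have habs : ∀ t : ℝ, t ^ (2 * j) * Real.exp (-t ^ 2 / 2)
      = |t| ^ (2 * j) * Real.exp (-|t| ^ 2 / 2) := by
    intro t
    rw [(even_two_mul j).pow_abs, sq_abs]
  rw [integral_congr_ae (Filter.Eventually.of_forall habs),
    integral_comp_abs (f := fun r => r ^ (2 * j) * Real.exp (-r ^ 2 / 2)), radial_eq]
  push_cast
  rw [Real.rpow_sub two_pos, Real.rpow_one]
  ring

lemma gm0 : ∫ t : ℝ, Real.exp (-t ^ 2 / 2) = 2 ^ ((1 : ℝ) / 2) * Real.sqrt π := by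
  have h := gm_even 0
  norm_num at h
  rw [h, Real.Gamma_one_half_eq]

lemma gm2 : ∫ t : ℝ, t ^ 2 * Real.exp (-t ^ 2 / 2) = 2 ^ ((1 : ℝ) / 2) * Real.sqrt π := by
  have h := gm_even 1
  norm_num at h
  rw [h, show (3 : ℝ) / 2 = 1 / 2 + 1 by norm_num,
    Real.Gamma_add_one (by norm_num : (1 : ℝ) / 2 ≠ 0), Real.Gamma_one_half_eq,
    show (1 : ℝ) / 2 + 1 = 1 / 2 + 1 by norm_num,
    Real.rpow_add two_pos, Real.rpow_one]
  ring

lemma gm4 : ∫ t : ℝ, t ^ 4 * Real.exp (-t ^ 2 / 2)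
    = 3 * (2 ^ ((1 : ℝ) / 2) * Real.sqrt π) := by
  have h := gm_even 2
  norm_num at h
  rw [h, show (5 : ℝ) / 2 = 3 / 2 + 1 by norm_num,
    Real.Gamma_add_one (by norm_num : (3 : ℝ) / 2 ≠ 0),
    show (3 : ℝ) / 2 = 1 / 2 + 1 by norm_num,
    Real.Gamma_add_one (by norm_num : (1 : ℝ) / 2 ≠ 0), Real.Gamma_one_half_eq,
    show (1 : ℝ) / 2 + 1 + 1 = 1 / 2 + 2 by norm_num,
    Real.rpow_add two_pos, show ((2 : ℝ) ^ (2 : ℝ)) = 4 by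
      rw [show (2 : ℝ) = ((2 : ℕ) : ℝ) by norm_num, Real.rpow_natCast]; norm_num]
  ring
open MeasureTheory Real Set Finset

lemma prod_update_e {k : ℕ} (i0 i1 : Fin k) (hne : i1 ≠ i0) (G : Fin k → ℕ → ℝ)
    (a b : ℕ) :
    ∏ i, G i (Function.update (Function.update (fun _ => 0) i1 b) i0 a i)
      = G i0 a * (G i1 b * ∏ i ∈ (Finset.univ \ {i0}) \ {i1}, G i 0) := by
  have hmem : i1 ∈ (Finset.univ : Finset (Fin k)) \ {i0} := by
    simp [Finset.mem_sdiff, hne]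
  have h1 : ∀ i, G i (Function.update (Function.update (fun _ => 0) i1 b) i0 a i)
      = Function.update (fun i => G i (Function.update (fun _ => 0) i1 b i)) i0 (G i0 a) i :=
    fun i => Function.apply_update G _ i0 _ i
  rw [Finset.prod_congr rfl fun i _ => h1 i, Finset.prod_update_of_mem (Finset.mem_univ i0)]
  have h2 : ∀ i, G i (Function.update (fun _ => 0) i1 b i)
      = Function.update (fun i => G i 0) i1 (G i1 b) i :=
    fun i => Function.apply_update G _ i1 _ i
  rw [Finset.prod_congr rfl fun i _ => h2 i, Finset.prod_update_of_mem hmem]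

lemma card_rest {k : ℕ} (h0 : 0 < k) (h1 : 1 < k) :
    (((Finset.univ : Finset (Fin k)) \ {⟨0, h0⟩}) \ {⟨1, h1⟩}).card = k - 2 := by
  have hne : (⟨1, h1⟩ : Fin k) ≠ ⟨0, h0⟩ := by simp [Fin.ext_iff]
  rw [Finset.card_sdiff_of_subset (by simp [Finset.singleton_subset_iff, Finset.mem_sdiff, hne]),
    Finset.card_sdiff_of_subset (by simp), Finset.card_univ, Fintype.card_fin,
    Finset.card_singleton, Finset.card_singleton]
  omega

lemma gauss_moment {k : ℕ} (h0 : 0 < k) (h1 : 1 < k) (p q : ℕ) :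
    ∫ x : EuclideanSpace ℝ (Fin k),
        (x ⟨0, h0⟩) ^ (2 * p) * (x ⟨1, h1⟩) ^ (2 * q) * Real.exp (-‖x‖ ^ 2 / 2)
      = (∫ t : ℝ, t ^ (2 * p) * Real.exp (-t ^ 2 / 2))
        * ((∫ t : ℝ, t ^ (2 * q) * Real.exp (-t ^ 2 / 2))
          * (∫ t : ℝ, Real.exp (-t ^ 2 / 2)) ^ (k - 2)) := by
  set i0 : Fin k := ⟨0, h0⟩
  set i1 : Fin k := ⟨1, h1⟩
  have hne : i1 ≠ i0 := by simp [i0, i1, Fin.ext_iff]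
  set e : Fin k → ℕ := Function.update (Function.update (fun _ => 0) i1 (2 * q)) i0 (2 * p)
    with he
  have step1 : ∫ x : EuclideanSpace ℝ (Fin k),
      (x i0) ^ (2 * p) * (x i1) ^ (2 * q) * Real.exp (-‖x‖ ^ 2 / 2)
      = ∫ z : Fin k → ℝ, ∏ i, ((z i) ^ (e i) * Real.exp (-(z i) ^ 2 / 2)) := by
    rw [← MeasurePreserving.integral_comp (EuclideanSpace.volume_preserving_symm_measurableEquiv_toLp (Fin k))
      (MeasurableEquiv.measurableEmbedding _)
      (fun z : Fin k → ℝ => ∏ i, ((z i) ^ (e i) * Real.exp (-(z i) ^ 2 / 2)))]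
    refine integral_congr_ae (Filter.Eventually.of_forall fun x => ?_)
    have hx : ∀ i, (MeasurableEquiv.toLp 2 (Fin k → ℝ)).symm x i = x i := fun i => rfl
    simp only [hx]
    rw [Finset.prod_mul_distrib]
    have hpow : ∏ i, (x i) ^ (e i) = (x i0) ^ (2 * p) * ((x i1) ^ (2 * q) * 1) := by
      rw [he, prod_update_e i0 i1 hne (fun i n => (x i) ^ n)]
      congr 1
      congr 1
      simp
    have hexp : ∏ i, Real.exp (-(x i) ^ 2 / 2) = Real.exp (-‖x‖ ^ 2 / 2) := by
      rw [← Real.exp_sum]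
      congr 1
      rw [EuclideanSpace.norm_eq, Real.sq_sqrt (by positivity)]
      simp only [Real.norm_eq_abs, sq_abs]
      rw [← Finset.sum_div, ← Finset.sum_neg_distrib]
    rw [hpow, hexp]
    ring
  rw [step1, MeasureTheory.volume_pi, MeasureTheory.integral_fintype_prod_eq_prod
    (fun i t => t ^ (e i) * Real.exp (-t ^ 2 / 2)), he,
    prod_update_e i0 i1 hne (fun _ n => ∫ t : ℝ, t ^ n * Real.exp (-t ^ 2 / 2))]
  congr 2
  rw [Finset.prod_const, card_rest h0 h1]
  refine congrArg (· ^ (k - 2)) ?_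
  refine integral_congr_ae (Filter.Eventually.of_forall fun t => ?_)
  simp
open MeasureTheory Real Set Finset Metric

lemma ball_moment {k : ℕ} (h0 : 0 < k) (h1 : 1 < k) (u : ℝ) (hu : 0 < u) (p q : ℕ) :
    ∫ x in closedBall (0 : EuclideanSpace ℝ (Fin k)) (Real.sqrt u),
        (x ⟨0, h0⟩) ^ (2 * p) * (x ⟨1, h1⟩) ^ (2 * q) * Real.exp (-‖x‖ ^ 2 / 2)
      = ((∫ t : ℝ, t ^ (2 * p) * Real.exp (-t ^ 2 / 2))
          * ((∫ t : ℝ, t ^ (2 * q) * Real.exp (-t ^ 2 / 2))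
            * (∫ t : ℝ, Real.exp (-t ^ 2 / 2)) ^ (k - 2))
          / (2 ^ ((((2 * (p + q) + k - 1 : ℕ) : ℝ) + 1) / 2 - 1)
              * Real.Gamma ((((2 * (p + q) + k - 1 : ℕ) : ℝ) + 1) / 2)))
        * ∫ r in (0 : ℝ)..(Real.sqrt u), r ^ (2 * (p + q) + k - 1) * Real.exp (-r ^ 2 / 2) := by
  set i0 : Fin k := ⟨0, h0⟩
  set i1 : Fin k := ⟨1, h1⟩
  set H : EuclideanSpace ℝ (Fin k) → ℝ := fun x => (x i0) ^ (2 * p) * (x i1) ^ (2 * q) with hHdef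
  have hH : ∀ c : ℝ, 0 < c → ∀ x, H (c • x) = c ^ (2 * (p + q)) * H x := by
    intro c hc x
    simp only [hHdef, PiLp.smul_apply, smul_eq_mul]
    rw [mul_pow, mul_pow]
    ring
  have hfull := polar_integral h0 (p + q) H hH (fun r => Real.exp (-r ^ 2 / 2))
  rw [show (∫ x : EuclideanSpace ℝ (Fin k), H x
        * (fun r => Real.exp (-r ^ 2 / 2)) ‖x‖)
      = ∫ x : EuclideanSpace ℝ (Fin k),
          (x i0) ^ (2 * p) * (x i1) ^ (2 * q) * Real.exp (-‖x‖ ^ 2 / 2) from rfl,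
    gauss_moment h0 h1 p q,
    show (∫ r in Ioi (0 : ℝ), r ^ (2 * (p + q) + k - 1)
        * (fun r => Real.exp (-r ^ 2 / 2)) r)
      = ∫ r in Ioi (0 : ℝ), r ^ (2 * (p + q) + k - 1) * Real.exp (-r ^ 2 / 2) from rfl] at hfull
  have hRpos : 0 < ∫ r in Ioi (0 : ℝ), r ^ (2 * (p + q) + k - 1) * Real.exp (-r ^ 2 / 2) :=
    radial_pos _
  have hTval : (∫ ω : sphere (0 : EuclideanSpace ℝ (Fin k)) 1, H ω ∂(volume.toSphere))
      = ((∫ t : ℝ, t ^ (2 * p) * Real.exp (-t ^ 2 / 2))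
          * ((∫ t : ℝ, t ^ (2 * q) * Real.exp (-t ^ 2 / 2))
            * (∫ t : ℝ, Real.exp (-t ^ 2 / 2)) ^ (k - 2)))
        / (∫ r in Ioi (0 : ℝ), r ^ (2 * (p + q) + k - 1) * Real.exp (-r ^ 2 / 2)) :=
    (eq_div_iff hRpos.ne').mpr hfull.symm
  have hball := polar_integral h0 (p + q) H hH
    (Set.indicator (Iic (Real.sqrt u)) (fun r => Real.exp (-r ^ 2 / 2)))
  have hleft : (∫ x : EuclideanSpace ℝ (Fin k), H x
        * (Set.indicator (Iic (Real.sqrt u)) (fun r => Real.exp (-r ^ 2 / 2))) ‖x‖)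
      = ∫ x in closedBall (0 : EuclideanSpace ℝ (Fin k)) (Real.sqrt u),
          (x i0) ^ (2 * p) * (x i1) ^ (2 * q) * Real.exp (-‖x‖ ^ 2 / 2) := by
    rw [← integral_indicator measurableSet_closedBall]
    refine integral_congr_ae (Filter.Eventually.of_forall fun x => ?_)
    beta_reduce
    by_cases hx : ‖x‖ ≤ Real.sqrt u
    · rw [Set.indicator_of_mem (Set.mem_Iic.mpr hx),
        Set.indicator_of_mem (mem_closedBall_zero_iff.mpr hx)]
    · rw [Set.indicator_of_notMem (fun h => hx (Set.mem_Iic.mp h)),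
        Set.indicator_of_notMem (fun h => hx (mem_closedBall_zero_iff.mp h)), mul_zero]
  have hright : (∫ r in Ioi (0 : ℝ), r ^ (2 * (p + q) + k - 1)
        * (Set.indicator (Iic (Real.sqrt u)) (fun r => Real.exp (-r ^ 2 / 2))) r)
      = ∫ r in (0 : ℝ)..(Real.sqrt u), r ^ (2 * (p + q) + k - 1) * Real.exp (-r ^ 2 / 2) := by
    have hpt : ∀ r : ℝ, r ^ (2 * (p + q) + k - 1)
          * (Set.indicator (Iic (Real.sqrt u)) (fun r => Real.exp (-r ^ 2 / 2))) r
        = Set.indicator (Iic (Real.sqrt u))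
            (fun r => r ^ (2 * (p + q) + k - 1) * Real.exp (-r ^ 2 / 2)) r := by
      intro r
      by_cases hr : r ∈ Iic (Real.sqrt u)
      · rw [Set.indicator_of_mem hr, Set.indicator_of_mem hr]
      · rw [Set.indicator_of_notMem hr, Set.indicator_of_notMem hr, mul_zero]
    rw [integral_congr_ae (Filter.Eventually.of_forall hpt),
      integral_indicator measurableSet_Iic, Measure.restrict_restrict measurableSet_Iic,
      Set.inter_comm, Set.Ioi_inter_Iic,
      intervalIntegral.integral_of_le (Real.sqrt_nonneg u)]
  rw [hleft, hright, hTval, radial_eq] at hball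
  exact hball
open MeasureTheory Real Set intervalIntegral

lemma key_ftc {k : ℕ} (hk : 2 ≤ k) {u : ℝ} (hu : 0 < u) (D0 D1 D2 D3 : ℝ)
    (hD0 : D0 = 2 ^ ((k : ℝ) / 2 - 1) * Real.Gamma ((k : ℝ) / 2))
    (hD1 : D1 = 2 ^ ((k : ℝ) / 2) * Real.Gamma ((k : ℝ) / 2 + 1))
    (hD2 : D2 = 2 ^ ((k : ℝ) / 2 + 1) * Real.Gamma ((k : ℝ) / 2 + 2))
    (hD3 : D3 = 2 ^ ((k : ℝ) / 2 + 2) * Real.Gamma ((k : ℝ) / 2 + 3)) :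
    3 / D3 * (∫ r in (0 : ℝ)..(Real.sqrt u), r ^ (k + 5) * Real.exp (-r ^ 2 / 2))
      - 9 / D2 * (∫ r in (0 : ℝ)..(Real.sqrt u), r ^ (k + 3) * Real.exp (-r ^ 2 / 2))
      + 9 / D1 * (∫ r in (0 : ℝ)..(Real.sqrt u), r ^ (k + 1) * Real.exp (-r ^ 2 / 2))
      - 3 / D0 * (∫ r in (0 : ℝ)..(Real.sqrt u), r ^ (k - 1) * Real.exp (-r ^ 2 / 2))
    = 3 * (-(2 * u / k) + 4 * u ^ 2 / (k * (k + 2)) - 2 * u ^ 3 / (k * (k + 2) * (k + 4)))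
        * (u ^ ((k : ℝ) / 2 - 1) * Real.exp (-u / 2)
          / (2 ^ ((k : ℝ) / 2) * Real.Gamma ((k : ℝ) / 2))) := by
  have hkR : (0 : ℝ) < k := by exact_mod_cast (by omega : 0 < k)
  have ha : (0 : ℝ) < (k : ℝ) / 2 := by linarith
  have hGa : 0 < Real.Gamma ((k : ℝ) / 2) := Real.Gamma_pos_of_pos ha
  have h2a : (0 : ℝ) < 2 ^ ((k : ℝ) / 2) := Real.rpow_pos_of_pos two_pos _
  -- Gamma recurrences
  have hG1 : Real.Gamma ((k : ℝ) / 2 + 1) = (k : ℝ) / 2 * Real.Gamma ((k : ℝ) / 2) :=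
    Real.Gamma_add_one ha.ne'
  have hG2 : Real.Gamma ((k : ℝ) / 2 + 2) = ((k : ℝ) / 2 + 1) * Real.Gamma ((k : ℝ) / 2 + 1) := by
    rw [show (k : ℝ) / 2 + 2 = ((k : ℝ) / 2 + 1) + 1 by ring,
      Real.Gamma_add_one (by positivity)]
  have hG3 : Real.Gamma ((k : ℝ) / 2 + 3) = ((k : ℝ) / 2 + 2) * Real.Gamma ((k : ℝ) / 2 + 2) := by
    rw [show (k : ℝ) / 2 + 3 = ((k : ℝ) / 2 + 2) + 1 by ring,
      Real.Gamma_add_one (by positivity)]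
  -- rpow recurrences
  have hp0 : (2 : ℝ) ^ ((k : ℝ) / 2 - 1) = 2 ^ ((k : ℝ) / 2) / 2 := by
    rw [Real.rpow_sub two_pos, Real.rpow_one]
  have hp2 : (2 : ℝ) ^ ((k : ℝ) / 2 + 1) = 2 ^ ((k : ℝ) / 2) * 2 := by
    rw [Real.rpow_add two_pos, Real.rpow_one]
  have hp3 : (2 : ℝ) ^ ((k : ℝ) / 2 + 2) = 2 ^ ((k : ℝ) / 2) * 4 := by
    rw [Real.rpow_add two_pos, show ((2 : ℝ) ^ (2 : ℝ)) = 4 by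
      rw [show (2 : ℝ) = ((2 : ℕ) : ℝ) by norm_num, Real.rpow_natCast]; norm_num]
  -- normalized D values
  have hD0' : D0 = 2 ^ ((k : ℝ) / 2) * Real.Gamma ((k : ℝ) / 2) / 2 := by
    rw [hD0, hp0]; ring
  have hD1' : D1 = (k : ℝ) / 2 * (2 ^ ((k : ℝ) / 2) * Real.Gamma ((k : ℝ) / 2)) := by
    rw [hD1, hG1]; ring
  have hD2' : D2 = ((k : ℝ) / 2 + 1) * ((k : ℝ) / 2)
      * (2 ^ ((k : ℝ) / 2) * Real.Gamma ((k : ℝ) / 2)) * 2 := by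
    rw [hD2, hG2, hG1, hp2]; ring
  have hD3' : D3 = ((k : ℝ) / 2 + 2) * (((k : ℝ) / 2 + 1) * ((k : ℝ) / 2))
      * (2 ^ ((k : ℝ) / 2) * Real.Gamma ((k : ℝ) / 2)) * 4 := by
    rw [hD3, hG3, hG2, hG1, hp3]; ring
  set α : ℝ := -3 / D1 with hα
  set β : ℝ := 6 / D2 with hβ
  set γ : ℝ := -3 / D3 with hγ
  set G : ℝ → ℝ := fun r => Real.exp (-r ^ 2 / 2) * (r ^ k * (α + β * r ^ 2 + γ * r ^ 4))
    with hG
  set ψ : ℝ → ℝ := fun r => Real.exp (-r ^ 2 / 2) * (3 / D3 * r ^ (k + 5)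
    - 9 / D2 * r ^ (k + 3) + 9 / D1 * r ^ (k + 1) - 3 / D0 * r ^ (k - 1)) with hψ
  have hD0pos : 0 < D0 := by rw [hD0']; positivity
  have hD1pos : 0 < D1 := by rw [hD1']; positivity
  have hD2pos : 0 < D2 := by rw [hD2']; positivity
  have hD3pos : 0 < D3 := by rw [hD3']; positivity
  -- combine into one integral
  have hcomb : 3 / D3 * (∫ r in (0 : ℝ)..(Real.sqrt u), r ^ (k + 5) * Real.exp (-r ^ 2 / 2))
      - 9 / D2 * (∫ r in (0 : ℝ)..(Real.sqrt u), r ^ (k + 3) * Real.exp (-r ^ 2 / 2))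
      + 9 / D1 * (∫ r in (0 : ℝ)..(Real.sqrt u), r ^ (k + 1) * Real.exp (-r ^ 2 / 2))
      - 3 / D0 * (∫ r in (0 : ℝ)..(Real.sqrt u), r ^ (k - 1) * Real.exp (-r ^ 2 / 2))
      = ∫ r in (0 : ℝ)..(Real.sqrt u), ψ r := by
    have i1 : IntervalIntegrable (fun r : ℝ => 3 / D3 * (r ^ (k + 5) * Real.exp (-r ^ 2 / 2)))
        volume 0 (Real.sqrt u) := (Continuous.intervalIntegrable (by fun_prop) _ _)
    have i2 : IntervalIntegrable (fun r : ℝ => 9 / D2 * (r ^ (k + 3) * Real.exp (-r ^ 2 / 2)))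
        volume 0 (Real.sqrt u) := (Continuous.intervalIntegrable (by fun_prop) _ _)
    have i3 : IntervalIntegrable (fun r : ℝ => 9 / D1 * (r ^ (k + 1) * Real.exp (-r ^ 2 / 2)))
        volume 0 (Real.sqrt u) := (Continuous.intervalIntegrable (by fun_prop) _ _)
    have i4 : IntervalIntegrable (fun r : ℝ => 3 / D0 * (r ^ (k - 1) * Real.exp (-r ^ 2 / 2)))
        volume 0 (Real.sqrt u) := (Continuous.intervalIntegrable (by fun_prop) _ _)
    rw [← intervalIntegral.integral_const_mul, ← intervalIntegral.integral_const_mul,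
      ← intervalIntegral.integral_const_mul, ← intervalIntegral.integral_const_mul,
      ← intervalIntegral.integral_sub i1 i2, ← intervalIntegral.integral_add (i1.sub i2) i3,
      ← intervalIntegral.integral_sub ((i1.sub i2).add i3) i4]
    refine intervalIntegral.integral_congr fun r _ => ?_
    simp only [hψ]
    ring
  -- FTC
  have hderiv : ∀ x ∈ Set.uIcc (0 : ℝ) (Real.sqrt u), HasDerivAt G (ψ x) x := by
    intro x _
    have hexp : HasDerivAt (fun r : ℝ => Real.exp (-r ^ 2 / 2))
        (-x * Real.exp (-x ^ 2 / 2)) x := by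
      have h : HasDerivAt (fun r : ℝ => -r ^ 2 / 2) (-x) x := by
        have := (hasDerivAt_pow 2 x).neg.div_const 2
        exact this.congr_deriv (by norm_num; ring)
      have := h.exp
      convert this using 1; ring
    have hpoly : HasDerivAt (fun r : ℝ => r ^ k * (α + β * r ^ 2 + γ * r ^ 4))
        ((k : ℝ) * x ^ (k - 1) * (α + β * x ^ 2 + γ * x ^ 4)
          + x ^ k * (β * (2 * x) + γ * (4 * x ^ 3))) x := by
      have h1 : HasDerivAt (fun r : ℝ => α + β * r ^ 2 + γ * r ^ 4)
          (β * (2 * x) + γ * (4 * x ^ 3)) x := by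
        have h2 := ((hasDerivAt_pow 2 x).const_mul β)
        have h4 := ((hasDerivAt_pow 4 x).const_mul γ)
        have := (h2.const_add α).add h4
        exact this.congr_deriv (by norm_num)
      exact (hasDerivAt_pow k x).mul h1
    have := hexp.mul hpoly
    refine this.congr_deriv ?_
    simp only [hψ]
    have e0 : x ^ k = x ^ (k - 1) * x := by
      rw [← pow_succ]; congr 1; omega
    have e1 : x ^ (k + 1) = x ^ (k - 1) * x ^ 2 := by
      rw [← pow_add]; congr 1; omega
    have e3 : x ^ (k + 3) = x ^ (k - 1) * x ^ 4 := by
      rw [← pow_add]; congr 1; omega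
    have e5 : x ^ (k + 5) = x ^ (k - 1) * x ^ 6 := by
      rw [← pow_add]; congr 1; omega
    rw [e0, e1, e3, e5, hα, hβ, hγ, hD1', hD2', hD3', hD0']
    have hGne : (2 : ℝ) ^ ((k : ℝ) / 2) * Real.Gamma ((k : ℝ) / 2) ≠ 0 := by positivity
    field_simp
    ring
  have hψint : IntervalIntegrable ψ volume 0 (Real.sqrt u) :=
    Continuous.intervalIntegrable (by fun_prop) _ _
  rw [hcomb, intervalIntegral.integral_eq_sub_of_hasDerivAt hderiv hψint]
  -- evaluate G at endpoints
  have hG0 : G 0 = 0 := by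
    simp only [hG]
    rw [zero_pow (by omega : k ≠ 0)]
    ring
  have hs2 : Real.sqrt u ^ 2 = u := Real.sq_sqrt hu.le
  have hs4 : Real.sqrt u ^ 4 = u ^ 2 := by
    rw [show 4 = 2 * 2 by norm_num, pow_mul, hs2]
  have hsk : Real.sqrt u ^ k = u ^ ((k : ℝ) / 2) := by
    rw [Real.sqrt_eq_rpow, ← Real.rpow_natCast (u ^ ((1 : ℝ) / 2)) k,
      ← Real.rpow_mul hu.le]
    congr 1; ring
  have hua : u ^ ((k : ℝ) / 2) = u ^ ((k : ℝ) / 2 - 1) * u := by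
    rw [← Real.rpow_add_one hu.ne']; congr 1; ring
  rw [hG0, sub_zero, hG]
  simp only
  rw [hs2, hs4, hsk, hua, hα, hβ, hγ, hD1', hD2', hD3']
  field_simp
  ring
open MeasureTheory Real Set Metric

theorem stmt11 (k : ℕ) (hk : 2 ≤ k) (u : ℝ) (hu : 0 < u) :
    (2 * Real.pi) ^ (-(k : ℝ) / 2) *
        ∫ z in {z : Fin k → ℝ | ∑ i, z i ^ 2 ≤ u},
          iteratedDeriv 2
            (fun s => iteratedDeriv 4
              (fun t => Real.exp
                (-(∑ i, Function.update (Function.update z ⟨1, by omega⟩ s) ⟨0, by omega⟩ t i ^ 2) / 2))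
              (z ⟨0, by omega⟩))
            (z ⟨1, by omega⟩) =
      3 * (-(2 * u / k) + 4 * u ^ 2 / (k * (k + 2)) -
          2 * u ^ 3 / (k * (k + 2) * (k + 4))) *
        (u ^ ((k : ℝ) / 2 - 1) * Real.exp (-u / 2) /
          (2 ^ ((k : ℝ) / 2) * Real.Gamma ((k : ℝ) / 2))) := by
  have h0 : 0 < k := by omega
  have h1 : 1 < k := hk
  set i0 : Fin k := ⟨0, h0⟩
  set i1 : Fin k := ⟨1, h1⟩
  -- Step 1: simplify the integrand
  have hstep1 : (∫ z in {z : Fin k → ℝ | ∑ i, z i ^ 2 ≤ u},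
      iteratedDeriv 2
        (fun s => iteratedDeriv 4
          (fun t => Real.exp
            (-(∑ i, Function.update (Function.update z ⟨1, h1⟩ s) ⟨0, h0⟩ t i ^ 2) / 2))
          (z ⟨0, h0⟩))
        (z ⟨1, h1⟩))
      = ∫ z in {z : Fin k → ℝ | ∑ i, z i ^ 2 ≤ u},
          ((z i0) ^ 4 - 6 * (z i0) ^ 2 + 3) * ((z i1) ^ 2 - 1)
            * Real.exp (-(∑ i, z i ^ 2) / 2) :=
    integral_congr_ae (Filter.Eventually.of_forall fun z => integrand_eq h0 h1 z)
  -- Step 2: transfer to Euclidean space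
  have hset : (MeasurableEquiv.toLp 2 (Fin k → ℝ)).symm ⁻¹' {z : Fin k → ℝ | ∑ i, z i ^ 2 ≤ u}
      = closedBall (0 : EuclideanSpace ℝ (Fin k)) (Real.sqrt u) := by
    ext x
    rw [Set.mem_preimage, Metric.mem_closedBall, dist_zero_right]
    show (∑ i, x i ^ 2 ≤ u) ↔ _
    have hn : ‖x‖ ^ 2 = ∑ i, x i ^ 2 := by
      rw [EuclideanSpace.norm_eq, Real.sq_sqrt (by positivity)]
      simp [Real.norm_eq_abs, sq_abs]
    constructor
    · intro h
      rw [EuclideanSpace.norm_eq]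
      simp only [Real.norm_eq_abs, sq_abs]
      exact Real.sqrt_le_sqrt h
    · intro h
      have h2 := pow_le_pow_left₀ (norm_nonneg x) h 2
      rw [Real.sq_sqrt hu.le, hn] at h2
      exact h2
  have hstep2 : (∫ z in {z : Fin k → ℝ | ∑ i, z i ^ 2 ≤ u},
        ((z i0) ^ 4 - 6 * (z i0) ^ 2 + 3) * ((z i1) ^ 2 - 1)
          * Real.exp (-(∑ i, z i ^ 2) / 2))
      = ∫ x in closedBall (0 : EuclideanSpace ℝ (Fin k)) (Real.sqrt u),
          ((x i0) ^ 4 - 6 * (x i0) ^ 2 + 3) * ((x i1) ^ 2 - 1)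
            * Real.exp (-‖x‖ ^ 2 / 2) := by
    rw [← MeasurePreserving.setIntegral_preimage_emb
      (EuclideanSpace.volume_preserving_symm_measurableEquiv_toLp (Fin k))
      (MeasurableEquiv.measurableEmbedding _)
      (fun z : Fin k → ℝ => ((z i0) ^ 4 - 6 * (z i0) ^ 2 + 3) * ((z i1) ^ 2 - 1)
        * Real.exp (-(∑ i, z i ^ 2) / 2))
      {z : Fin k → ℝ | ∑ i, z i ^ 2 ≤ u}, hset]
    refine setIntegral_congr_fun measurableSet_closedBall fun x _ => ?_
    show ((x i0) ^ 4 - 6 * (x i0) ^ 2 + 3) * ((x i1) ^ 2 - 1)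
        * Real.exp (-(∑ i, x i ^ 2) / 2) = _
    have hn : ‖x‖ ^ 2 = ∑ i, x i ^ 2 := by
      rw [EuclideanSpace.norm_eq, Real.sq_sqrt (by positivity)]
      simp [Real.norm_eq_abs, sq_abs]
    rw [hn]
  rw [hstep1, hstep2]

  -- Step 3: split into six monomial integrals
  set B := closedBall (0 : EuclideanSpace ℝ (Fin k)) (Real.sqrt u) with hB
  have hcpt : IsCompact B := isCompact_closedBall _ _
  have hInt : ∀ a b : ℕ, IntegrableOn
      (fun x : EuclideanSpace ℝ (Fin k) => x i0 ^ a * x i1 ^ b * Real.exp (-‖x‖ ^ 2 / 2))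
      B volume := by
    intro a b
    apply ContinuousOn.integrableOn_compact hcpt
    apply Continuous.continuousOn
    fun_prop
  have hsplit : (∫ x in B, ((x i0) ^ 4 - 6 * (x i0) ^ 2 + 3) * ((x i1) ^ 2 - 1)
        * Real.exp (-‖x‖ ^ 2 / 2))
      = (∫ x in B, x i0 ^ (2 * 2) * x i1 ^ (2 * 1) * Real.exp (-‖x‖ ^ 2 / 2))
        - (∫ x in B, x i0 ^ (2 * 2) * x i1 ^ (2 * 0) * Real.exp (-‖x‖ ^ 2 / 2))
        - 6 * (∫ x in B, x i0 ^ (2 * 1) * x i1 ^ (2 * 1) * Real.exp (-‖x‖ ^ 2 / 2))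
        + 6 * (∫ x in B, x i0 ^ (2 * 1) * x i1 ^ (2 * 0) * Real.exp (-‖x‖ ^ 2 / 2))
        + 3 * (∫ x in B, x i0 ^ (2 * 0) * x i1 ^ (2 * 1) * Real.exp (-‖x‖ ^ 2 / 2))
        - 3 * (∫ x in B, x i0 ^ (2 * 0) * x i1 ^ (2 * 0) * Real.exp (-‖x‖ ^ 2 / 2)) := by
    have hpt : ∀ x : EuclideanSpace ℝ (Fin k),
        ((x i0) ^ 4 - 6 * (x i0) ^ 2 + 3) * ((x i1) ^ 2 - 1) * Real.exp (-‖x‖ ^ 2 / 2)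
        = x i0 ^ (2 * 2) * x i1 ^ (2 * 1) * Real.exp (-‖x‖ ^ 2 / 2)
          - x i0 ^ (2 * 2) * x i1 ^ (2 * 0) * Real.exp (-‖x‖ ^ 2 / 2)
          - 6 * (x i0 ^ (2 * 1) * x i1 ^ (2 * 1) * Real.exp (-‖x‖ ^ 2 / 2))
          + 6 * (x i0 ^ (2 * 1) * x i1 ^ (2 * 0) * Real.exp (-‖x‖ ^ 2 / 2))
          + 3 * (x i0 ^ (2 * 0) * x i1 ^ (2 * 1) * Real.exp (-‖x‖ ^ 2 / 2))
          - 3 * (x i0 ^ (2 * 0) * x i1 ^ (2 * 0) * Real.exp (-‖x‖ ^ 2 / 2)) := by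
      intro x
      norm_num
      ring
    rw [setIntegral_congr_fun hcpt.measurableSet (fun x _ => hpt x)]
    have hA1 : Integrable (fun x : EuclideanSpace ℝ (Fin k) =>
        x i0 ^ (2 * 2) * x i1 ^ (2 * 1) * Real.exp (-‖x‖ ^ 2 / 2)
          - x i0 ^ (2 * 2) * x i1 ^ (2 * 0) * Real.exp (-‖x‖ ^ 2 / 2)) (volume.restrict B) :=
      (hInt _ _).sub (hInt _ _)
    have hA2 : Integrable (fun x : EuclideanSpace ℝ (Fin k) =>
        x i0 ^ (2 * 2) * x i1 ^ (2 * 1) * Real.exp (-‖x‖ ^ 2 / 2)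
          - x i0 ^ (2 * 2) * x i1 ^ (2 * 0) * Real.exp (-‖x‖ ^ 2 / 2)
          - 6 * (x i0 ^ (2 * 1) * x i1 ^ (2 * 1) * Real.exp (-‖x‖ ^ 2 / 2)))
        (volume.restrict B) := hA1.sub ((hInt _ _).const_mul 6)
    have hA3 : Integrable (fun x : EuclideanSpace ℝ (Fin k) =>
        x i0 ^ (2 * 2) * x i1 ^ (2 * 1) * Real.exp (-‖x‖ ^ 2 / 2)
          - x i0 ^ (2 * 2) * x i1 ^ (2 * 0) * Real.exp (-‖x‖ ^ 2 / 2)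
          - 6 * (x i0 ^ (2 * 1) * x i1 ^ (2 * 1) * Real.exp (-‖x‖ ^ 2 / 2))
          + 6 * (x i0 ^ (2 * 1) * x i1 ^ (2 * 0) * Real.exp (-‖x‖ ^ 2 / 2)))
        (volume.restrict B) := hA2.add ((hInt _ _).const_mul 6)
    have hA4 : Integrable (fun x : EuclideanSpace ℝ (Fin k) =>
        x i0 ^ (2 * 2) * x i1 ^ (2 * 1) * Real.exp (-‖x‖ ^ 2 / 2)
          - x i0 ^ (2 * 2) * x i1 ^ (2 * 0) * Real.exp (-‖x‖ ^ 2 / 2)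
          - 6 * (x i0 ^ (2 * 1) * x i1 ^ (2 * 1) * Real.exp (-‖x‖ ^ 2 / 2))
          + 6 * (x i0 ^ (2 * 1) * x i1 ^ (2 * 0) * Real.exp (-‖x‖ ^ 2 / 2))
          + 3 * (x i0 ^ (2 * 0) * x i1 ^ (2 * 1) * Real.exp (-‖x‖ ^ 2 / 2)))
        (volume.restrict B) := hA3.add ((hInt _ _).const_mul 3)
    rw [integral_sub hA4 ((hInt _ _).const_mul 3),
      integral_add hA3 ((hInt _ _).const_mul 3),
      integral_add hA2 ((hInt _ _).const_mul 6),
      integral_sub hA1 ((hInt _ _).const_mul 6),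
      integral_sub (hInt _ _) (hInt _ _),
      MeasureTheory.integral_const_mul, MeasureTheory.integral_const_mul,
      MeasureTheory.integral_const_mul, MeasureTheory.integral_const_mul]
  rw [hsplit]
  -- Step 4: evaluate each monomial integral and conclude
  have hDcast : ∀ m : ℕ, (((2 * m + k - 1 : ℕ) : ℝ) + 1) / 2 = (m : ℝ) + (k : ℝ) / 2 := by
    intro m
    rw [Nat.cast_sub (by omega)]
    push_cast
    ring
  have gm00 : ∫ t : ℝ, t ^ (2 * 0) * Real.exp (-t ^ 2 / 2)
      = 2 ^ ((1 : ℝ) / 2) * Real.sqrt π := by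
    rw [show ∫ t : ℝ, t ^ (2 * 0) * Real.exp (-t ^ 2 / 2)
        = ∫ t : ℝ, Real.exp (-t ^ 2 / 2) by norm_num, gm0]
  have gm02 : ∫ t : ℝ, t ^ (2 * 1) * Real.exp (-t ^ 2 / 2)
      = 2 ^ ((1 : ℝ) / 2) * Real.sqrt π := by
    rw [show (2 * 1 : ℕ) = 2 by norm_num, gm2]
  have gm04 : ∫ t : ℝ, t ^ (2 * 2) * Real.exp (-t ^ 2 / 2)
      = 3 * (2 ^ ((1 : ℝ) / 2) * Real.sqrt π) := by
    rw [show (2 * 2 : ℕ) = 4 by norm_num, gm4]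
  have hABC : (2 * Real.pi) ^ (-(k : ℝ) / 2)
      * ((2 ^ ((1 : ℝ) / 2) * Real.sqrt π) * ((2 ^ ((1 : ℝ) / 2) * Real.sqrt π)
        * (2 ^ ((1 : ℝ) / 2) * Real.sqrt π) ^ (k - 2))) = 1 := by
    have hw : (2 : ℝ) ^ ((1 : ℝ) / 2) * Real.sqrt π = (2 * π) ^ ((1 : ℝ) / 2) := by
      rw [Real.sqrt_eq_rpow, ← Real.mul_rpow (by norm_num) Real.pi_pos.le]
    have hpow : (2 ^ ((1 : ℝ) / 2) * Real.sqrt π)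
        * ((2 ^ ((1 : ℝ) / 2) * Real.sqrt π) * (2 ^ ((1 : ℝ) / 2) * Real.sqrt π) ^ (k - 2))
        = ((2 * π) ^ ((1 : ℝ) / 2)) ^ (k : ℕ) := by
      rw [← pow_succ' _ (k - 2), ← pow_succ', hw]
      congr 1
      omega
    rw [hpow, ← Real.rpow_natCast ((2 * π) ^ ((1 : ℝ) / 2)) k,
      ← Real.rpow_mul (by positivity), ← Real.rpow_add (by positivity)]
    rw [show -(k : ℝ) / 2 + 1 / 2 * (k : ℝ) = 0 by ring, Real.rpow_zero]
  -- six values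
  have e1 := ball_moment h0 h1 u hu 2 1
  rw [gm04, gm02, gm0, hDcast (2 + 1), show ((2 + 1 : ℕ) : ℝ) + (k : ℝ) / 2 - 1
      = (k : ℝ) / 2 + 2 by push_cast; ring,
    show ((2 + 1 : ℕ) : ℝ) + (k : ℝ) / 2 = (k : ℝ) / 2 + 3 by push_cast; ring,
    show 2 * (2 + 1) + k - 1 = k + 5 by omega] at e1
  have e2 := ball_moment h0 h1 u hu 2 0
  rw [gm04, gm00, gm0, hDcast (2 + 0), show ((2 + 0 : ℕ) : ℝ) + (k : ℝ) / 2 - 1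
      = (k : ℝ) / 2 + 1 by push_cast; ring,
    show ((2 + 0 : ℕ) : ℝ) + (k : ℝ) / 2 = (k : ℝ) / 2 + 2 by push_cast; ring,
    show 2 * (2 + 0) + k - 1 = k + 3 by omega] at e2
  have e3 := ball_moment h0 h1 u hu 1 1
  rw [gm02, gm0, hDcast (1 + 1), show ((1 + 1 : ℕ) : ℝ) + (k : ℝ) / 2 - 1
      = (k : ℝ) / 2 + 1 by push_cast; ring,
    show ((1 + 1 : ℕ) : ℝ) + (k : ℝ) / 2 = (k : ℝ) / 2 + 2 by push_cast; ring,
    show 2 * (1 + 1) + k - 1 = k + 3 by omega] at e3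
  have e4 := ball_moment h0 h1 u hu 1 0
  rw [gm02, gm00, gm0, hDcast (1 + 0), show ((1 + 0 : ℕ) : ℝ) + (k : ℝ) / 2 - 1
      = (k : ℝ) / 2 by push_cast; ring,
    show ((1 + 0 : ℕ) : ℝ) + (k : ℝ) / 2 = (k : ℝ) / 2 + 1 by push_cast; ring,
    show 2 * (1 + 0) + k - 1 = k + 1 by omega] at e4
  have e5 := ball_moment h0 h1 u hu 0 1
  rw [gm00, gm02, gm0, hDcast (0 + 1), show ((0 + 1 : ℕ) : ℝ) + (k : ℝ) / 2 - 1
      = (k : ℝ) / 2 by push_cast; ring,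
    show ((0 + 1 : ℕ) : ℝ) + (k : ℝ) / 2 = (k : ℝ) / 2 + 1 by push_cast; ring,
    show 2 * (0 + 1) + k - 1 = k + 1 by omega] at e5
  have e6 := ball_moment h0 h1 u hu 0 0
  rw [gm00, gm0, hDcast (0 + 0), show ((0 + 0 : ℕ) : ℝ) + (k : ℝ) / 2 - 1
      = (k : ℝ) / 2 - 1 by push_cast; ring,
    show ((0 + 0 : ℕ) : ℝ) + (k : ℝ) / 2 = (k : ℝ) / 2 by push_cast; ring,
    show 2 * (0 + 0) + k - 1 = k - 1 by omega] at e6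
  have key := key_ftc hk hu
    (2 ^ ((k : ℝ) / 2 - 1) * Real.Gamma ((k : ℝ) / 2))
    (2 ^ ((k : ℝ) / 2) * Real.Gamma ((k : ℝ) / 2 + 1))
    (2 ^ ((k : ℝ) / 2 + 1) * Real.Gamma ((k : ℝ) / 2 + 2))
    (2 ^ ((k : ℝ) / 2 + 2) * Real.Gamma ((k : ℝ) / 2 + 3)) rfl rfl rfl rfl
  rw [e1, e2, e3, e4, e5, e6]
  have hxk4 : (2 : ℝ) ^ ((k : ℝ) / 2) ≠ 0 := (Real.rpow_pos_of_pos two_pos _).ne'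
  linear_combination (3 * (∫ r in (0:ℝ)..(Real.sqrt u), r ^ (k + 5) * Real.exp (-r ^ 2 / 2))
        / (2 ^ ((k : ℝ) / 2 + 2) * Real.Gamma ((k : ℝ) / 2 + 3))
      - 3 * (∫ r in (0:ℝ)..(Real.sqrt u), r ^ (k + 3) * Real.exp (-r ^ 2 / 2))
        / (2 ^ ((k : ℝ) / 2 + 1) * Real.Gamma ((k : ℝ) / 2 + 2))
      - 6 * (∫ r in (0:ℝ)..(Real.sqrt u), r ^ (k + 3) * Real.exp (-r ^ 2 / 2))
        / (2 ^ ((k : ℝ) / 2 + 1) * Real.Gamma ((k : ℝ) / 2 + 2))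
      + 6 * (∫ r in (0:ℝ)..(Real.sqrt u), r ^ (k + 1) * Real.exp (-r ^ 2 / 2))
        / (2 ^ ((k : ℝ) / 2) * Real.Gamma ((k : ℝ) / 2 + 1))
      + 3 * (∫ r in (0:ℝ)..(Real.sqrt u), r ^ (k + 1) * Real.exp (-r ^ 2 / 2))
        / (2 ^ ((k : ℝ) / 2) * Real.Gamma ((k : ℝ) / 2 + 1))
      - 3 * (∫ r in (0:ℝ)..(Real.sqrt u), r ^ (k - 1) * Real.exp (-r ^ 2 / 2))
        / (2 ^ ((k : ℝ) / 2 - 1) * Real.Gamma ((k : ℝ) / 2))) * hABC + key
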